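/- Let V be a vector space with basis S over a field of characteristic 0. Let d be the degree-1 derivation of T(V) with d(s)=s⊗s (Koszul signs), and let wₙ: V^{⊗n} → Lₙ(V) be the left-normed bracketing map. Then there exists a linear map gₙ: V^{⊗n} → V^{⊗(n+1)} such that w_{n+1} ∘ gₙ = d ∘ wₙ; i.e., the differential restricted to the image of the bracketing projector factors through w_{n+1}. -/

import Mathlib

/-- Auxiliary function computing a left-normed graded commutator: `glnbAux a p l`
brackets the (degree `p`) element `a` successively with the degree-one elements of
`l`, using the graded bracket `[x,b] = x*b − (−1)^{|x|} b*x`. -/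
def glnbAux {A : Type*} [Ring A] : A → ℕ → List A → A
  | a, _, [] => a
  | a, p, b :: l => glnbAux (a * b - ((-1 : ℤ) ^ p) • (b * a)) (p + 1) l

/-- The left-normed graded commutator `[...[v₁,v₂],...,vₙ]` of `n ≥ 1` elements of
`V ⊆ T(V)`, each placed in degree one. -/
noncomputable def glnbF (k : Type*) (V : Type*) [CommRing k] [AddCommGroup V]
    [Module k V] {n : ℕ} (v : Fin (n + 1) → V) : TensorAlgebra k V :=
  glnbAux (TensorAlgebra.ι k (v 0)) 1
    (List.ofFn fun i : Fin n => TensorAlgebra.ι k (v i.succ))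

/-!
Extending `s ↦ s ⊗ s` linearly from the basis to `δ : V → T(V)`, the map `d` is the odd
derivation `D` of `T(V)` with `D v = δ v`. It is built as the lower-left entry of the algebra map
`T(V) → M₂(T(V))` sending `v` to `!![v, 0; δ v, -v]`: multiplicativity of this map is exactly the
graded Leibniz rule `D (x y) = D x · y + x̂ · D y`, where `x̂` is the grade involution.

For a graded bracket with a basis vector `s`, the Leibniz rule gives
`D [a, s] = [D a, s] ± [[a, s], s]`, since `[[a, s], s] = a s² - s² a` whatever the parity of `a`.
By induction, `D [s₀, …, sₘ] = ∑ⱼ cⱼ [s₀, …, sⱼ, sⱼ, …, sₘ]` with `c₀ = 1/2` (because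
`[s, s] = 2 s²`) and `cⱼ = (-1)ʲ` for `j > 0`. So `g`, which doubles the `j`-th letter of a basis
word with coefficient `cⱼ`, satisfies `w_{n+1} ∘ g = d ∘ wₙ` on every basis word of length `n + 1`.
-/

open TensorAlgebra

namespace TensorAlgebra

variable {R M : Type*} [CommRing R] [AddCommGroup M] [Module R M]

theorem tprod_succ (n : ℕ) (v : Fin (n + 1) → M) :
    tprod R M (n + 1) v = tprod R M n (fun i => v i.castSucc) * ι R (v (Fin.last n)) := by
  simp only [tprod_apply, List.ofFn_succ', List.prod_concat]

variable (R) in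
def involute : TensorAlgebra R M →ₐ[R] TensorAlgebra R M :=
  lift R (-ι R)

@[simp]
theorem involute_ι (v : M) : involute R (ι R v) = -ι R v := by
  simp [involute]

theorem involute_tprod (n : ℕ) (v : Fin n → M) :
    involute R (tprod R M n v) = ((-1 : R) ^ n) • tprod R M n v := by
  induction n with
  | zero => simp
  | succ n ih =>
    rw [tprod_succ, map_mul, ih, involute_ι, smul_mul_assoc, mul_neg, pow_succ, mul_neg_one,
      neg_smul, smul_neg]

def oddDerivationMatrix (δ : M →ₗ[R] TensorAlgebra R M) :
    M →ₗ[R] Matrix (Fin 2) (Fin 2) (TensorAlgebra R M) where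
  toFun v := !![ι R v, 0; δ v, -ι R v]
  map_add' v w := by ext i j; fin_cases i <;> fin_cases j <;> simp [add_comm]
  map_smul' c v := by ext i j; fin_cases i <;> fin_cases j <;> simp

def oddDerivationHom (δ : M →ₗ[R] TensorAlgebra R M) :
    TensorAlgebra R M →ₐ[R] Matrix (Fin 2) (Fin 2) (TensorAlgebra R M) :=
  lift R (oddDerivationMatrix δ)

def oddDerivation (δ : M →ₗ[R] TensorAlgebra R M) :
    TensorAlgebra R M →ₗ[R] TensorAlgebra R M :=
  Matrix.entryLinearMap R _ 1 0 ∘ₗ (oddDerivationHom δ).toLinearMap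

variable (δ : M →ₗ[R] TensorAlgebra R M)

theorem oddDerivationHom_apply (x : TensorAlgebra R M) :
    oddDerivationHom δ x = !![x, 0; oddDerivation δ x, involute R x] := by
  induction x using TensorAlgebra.induction with
  | algebraMap r =>
    ext i j
    fin_cases i <;> fin_cases j <;> simp [oddDerivation, Matrix.algebraMap_matrix_apply]
  | ι v => simp [oddDerivation, oddDerivationHom, oddDerivationMatrix]
  | mul x y hx hy =>
    ext i j
    fin_cases i <;> fin_cases j
    all_goals first
      | rfl
      | simp [hx, hy, Matrix.mul_apply, Fin.sum_univ_two]
  | add x y hx hy =>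
    ext i j
    fin_cases i <;> fin_cases j
    all_goals first
      | rfl
      | simp [hx, hy]

theorem oddDerivation_ι (v : M) : oddDerivation δ (ι R v) = δ v := by
  simp [oddDerivation, oddDerivationHom, oddDerivationMatrix]

theorem oddDerivation_mul (x y : TensorAlgebra R M) :
    oddDerivation δ (x * y) = oddDerivation δ x * y + involute R x * oddDerivation δ y := by
  change oddDerivationHom δ (x * y) 1 0 = _
  rw [map_mul, oddDerivationHom_apply, oddDerivationHom_apply]
  simp [Matrix.mul_apply, Fin.sum_univ_two]

theorem oddDerivation_tprod {n : ℕ} (v : Fin n → M)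
    (hv : ∀ i, δ (v i) = ι R (v i) * ι R (v i)) :
    oddDerivation δ (tprod R M n v) =
      ∑ j : Fin n, ((-1 : R) ^ (j : ℕ)) • tprod R M (n + 1) (fun i => v (j.predAbove i)) := by
  induction n with
  | zero => simpa using oddDerivation_mul δ 1 1
  | succ n ih =>
    rw [tprod_succ, oddDerivation_mul, ih _ fun i => hv _, oddDerivation_ι, hv, involute_tprod,
      Fin.sum_univ_castSucc, Finset.sum_mul]
    congr 1
    · refine Finset.sum_congr rfl fun j _ => ?_
      simp only [smul_mul_assoc, tprod_succ (n + 1), Fin.val_castSucc, Fin.predAbove_right_last,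
        Fin.castSucc_predAbove_castSucc]
    · simp only [tprod_succ (n + 1), tprod_succ n, Fin.val_last, smul_mul_assoc, mul_assoc,
        Fin.predAbove_right_last, Fin.predAbove_last_castSucc]

end TensorAlgebra

/-- The graded commutator `[a, y]` of `a` of degree `p` with `y` of degree one. -/
def gradedBracket {A : Type*} [Ring A] (p : ℕ) (a y : A) : A :=
  a * y - ((-1 : ℤ) ^ p) • (y * a)

theorem glnbAux_append {A : Type*} [Ring A] (a y : A) (p : ℕ) (l : List A) :
    glnbAux a p (l ++ [y]) = gradedBracket (p + l.length) (glnbAux a p l) y := by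
  induction l generalizing a p with
  | nil => rfl
  | cons c l ih =>
    rw [List.cons_append, glnbAux, glnbAux, ih, List.length_cons, Nat.add_right_comm, add_assoc]

theorem gradedBracket_sum_smul {R A ι : Type*} [CommRing R] [Ring A] [Algebra R A]
    (s : Finset ι) (c : ι → R) (a : ι → A) (p : ℕ) (y : A) :
    gradedBracket p (∑ i ∈ s, c i • a i) y = ∑ i ∈ s, c i • gradedBracket p (a i) y := by
  simp only [gradedBracket, Finset.sum_mul, Finset.mul_sum, smul_mul_assoc, mul_smul_comm,
    Finset.smul_sum, ← Finset.sum_sub_distrib, smul_sub, smul_comm ((-1 : ℤ) ^ p)]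

def doublingCoeff (R : Type*) [CommRing R] [Invertible (2 : R)] {m : ℕ} (j : Fin m) : R :=
  if (j : ℕ) = 0 then ⅟2 else (-1) ^ (j : ℕ)

section GradedBracket

variable {R M : Type*} [CommRing R] [AddCommGroup M] [Module R M]

theorem glnbF_one (v : Fin 1 → M) : glnbF R M v = ι R (v 0) := rfl

theorem glnbF_succ {m : ℕ} (v : Fin (m + 2) → M) :
    glnbF R M v =
      gradedBracket (m + 1) (glnbF R M fun i => v i.castSucc) (ι R (v (Fin.last (m + 1)))) := by
  rw [glnbF, List.ofFn_succ', List.concat_eq_append, glnbAux_append, List.length_ofFn,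
    add_comm 1 m]
  congr

theorem involute_gradedBracket {a : TensorAlgebra R M} {p : ℕ}
    (ha : involute R a = ((-1 : ℤ) ^ p) • a) (v : M) :
    involute R (gradedBracket p a (ι R v)) =
      ((-1 : ℤ) ^ (p + 1)) • gradedBracket p a (ι R v) := by
  simp only [gradedBracket, map_sub, map_zsmul, map_mul, ha, involute_ι, smul_mul_assoc,
    mul_smul_comm, mul_neg, neg_mul, smul_neg, pow_succ]
  rcases neg_one_pow_eq_or ℤ p with h | h <;> rw [h] <;> module

theorem involute_glnbF {m : ℕ} (v : Fin (m + 1) → M) :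
    involute R (glnbF R M v) = ((-1 : ℤ) ^ (m + 1)) • glnbF R M v := by
  induction m with
  | zero => simp [glnbF_one]
  | succ m ih => rw [glnbF_succ, involute_gradedBracket (ih _)]

variable (δ : M →ₗ[R] TensorAlgebra R M)

theorem oddDerivation_gradedBracket {a : TensorAlgebra R M} {p : ℕ}
    (ha : involute R a = ((-1 : ℤ) ^ p) • a) {v : M} (hv : δ v = ι R v * ι R v) :
    oddDerivation δ (gradedBracket p a (ι R v)) =
      gradedBracket (p + 1) (oddDerivation δ a) (ι R v) +
        ((-1 : ℤ) ^ p) • gradedBracket (p + 1) (gradedBracket p a (ι R v)) (ι R v) := by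
  simp only [gradedBracket, map_sub, map_zsmul, oddDerivation_mul, ha, involute_ι,
    oddDerivation_ι, hv, smul_mul_assoc, mul_smul_comm, mul_neg, neg_mul, smul_sub,
    mul_sub, sub_mul, mul_assoc, pow_succ]
  rcases neg_one_pow_eq_or ℤ p with h | h <;> rw [h] <;> module

variable [Invertible (2 : R)]

theorem doublingCoeff_castSucc {m : ℕ} (j : Fin m) :
    doublingCoeff R j.castSucc = doublingCoeff R j := by
  simp [doublingCoeff]

theorem doublingCoeff_last_smul {N : Type*} [AddCommGroup N] [Module R N] (m : ℕ) (x : N) :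
    doublingCoeff R (Fin.last (m + 1)) • x = ((-1 : ℤ) ^ (m + 1)) • x := by
  simp [doublingCoeff, ← Int.cast_smul_eq_zsmul R]

theorem oddDerivation_glnbF {m : ℕ} (v : Fin (m + 1) → M)
    (hv : ∀ i, δ (v i) = ι R (v i) * ι R (v i)) :
    oddDerivation δ (glnbF R M v) =
      ∑ j : Fin (m + 1), doublingCoeff R j • glnbF R M (fun i => v (j.predAbove i)) := by
  induction m with
  | zero =>
    simp only [glnbF_one, oddDerivation_ι, hv, glnbF_succ]
    simp [doublingCoeff, gradedBracket, ← two_smul R, smul_smul]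
  | succ m ih =>
    have hdouble (j : Fin (m + 1)) :
        glnbF R M (fun i => v (j.castSucc.predAbove i)) = gradedBracket (m + 2)
          (glnbF R M fun i => v (j.predAbove i).castSucc) (ι R (v (Fin.last (m + 1)))) := by
      simp only [glnbF_succ (m := m + 1), Fin.castSucc_predAbove_castSucc,
        Fin.predAbove_right_last]
    have hdouble_last : glnbF R M (fun i => v ((Fin.last (m + 1)).predAbove i)) =
        gradedBracket (m + 2) (glnbF R M v) (ι R (v (Fin.last (m + 1)))) := by
      simp only [glnbF_succ (m := m + 1), Fin.predAbove_right_last, Fin.predAbove_last_castSucc]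
    rw [glnbF_succ v, oddDerivation_gradedBracket δ (involute_glnbF _) (hv _),
      ih _ fun i => hv _, gradedBracket_sum_smul, Fin.sum_univ_castSucc (n := m + 1),
      doublingCoeff_last_smul, hdouble_last, ← glnbF_succ]
    simp only [doublingCoeff_castSucc, hdouble]

end GradedBracket

namespace Module.Basis

variable {R M κ : Type*} [CommRing R] [AddCommGroup M] [Module R M] (b : Basis κ R M)

theorem tensorAlgebra_ofList_ofFn {n : ℕ} (f : Fin n → κ) :
    b.tensorAlgebra (FreeMonoid.ofList (List.ofFn f)) = tprod R M n fun i => b (f i) := by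
  simp [Module.Basis.tensorAlgebra, FreeAlgebra.basisFreeMonoid,
    FreeAlgebra.equivMonoidAlgebraFreeMonoid, FreeMonoid.lift_apply, map_list_prod,
    List.map_ofFn, Function.comp_def]

theorem tensorAlgebra_ext_tprod {N : Type*} [AddCommGroup N] [Module R N]
    {φ ψ : TensorAlgebra R M →ₗ[R] N}
    (h : ∀ (n : ℕ) (f : Fin n → κ),
      φ (tprod R M n fun i => b (f i)) = ψ (tprod R M n fun i => b (f i))) :
    φ = ψ :=
  b.tensorAlgebra.ext fun w => by
    rw [← FreeMonoid.ofList_toList w, ← List.ofFn_get w.toList, tensorAlgebra_ofList_ofFn]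
    exact h _ _

theorem tensorAlgebra_constr_tprod {N : Type*} [AddCommGroup N] [Module R N]
    (F : (n : ℕ) → (Fin n → κ) → N) {n : ℕ} (f : Fin n → κ) :
    b.tensorAlgebra.constr R (fun w => F _ w.toList.get) (tprod R M n fun i => b (f i)) =
      F n f := by
  rw [← tensorAlgebra_ofList_ofFn, constr_basis, FreeMonoid.toList_ofList]
  have hword : (⟨_, (List.ofFn f).get⟩ : Σ n, Fin n → κ) = ⟨n, f⟩ :=
    List.ofFn_inj'.mp (List.ofFn_get _)
  exact congrArg (fun w : Σ n, Fin n → κ => F w.1 w.2) hword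

theorem span_tprod (n : ℕ) :
    Submodule.span R (Set.range fun f : Fin n → κ => tprod R M n fun i => b (f i)) =
      LinearMap.range (ι R) ^ n := by
  have hrange : LinearMap.range (ι R) = Submodule.span R (Set.range fun s => ι R (b s)) := by
    rw [← Submodule.map_top, ← b.span_eq, Submodule.map_span, ← Set.range_comp]
    rfl
  rw [hrange, Submodule.span_pow]
  congr 1
  ext x
  simp only [Set.mem_range, Set.mem_pow, tprod_apply]
  constructor
  · rintro ⟨f, rfl⟩
    exact ⟨fun i => ⟨_, f i, rfl⟩, rfl⟩
  · rintro ⟨f, rfl⟩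
    choose g hg using fun i => (f i).2
    exact ⟨g, by simp only [hg]⟩

variable [Invertible (2 : R)]

noncomputable def doublingMap : TensorAlgebra R M →ₗ[R] TensorAlgebra R M :=
  b.tensorAlgebra.constr R fun w =>
    ∑ j, doublingCoeff R j • tprod R M _ fun i => b (w.toList.get (j.predAbove i))

theorem doublingMap_tprod {n : ℕ} (f : Fin n → κ) :
    b.doublingMap (tprod R M n fun i => b (f i)) =
      ∑ j : Fin n, doublingCoeff R j • tprod R M (n + 1) fun i => b (f (j.predAbove i)) :=
  b.tensorAlgebra_constr_tprod
    (fun n f => ∑ j : Fin n, doublingCoeff R j • tprod R M (n + 1) fun i => b (f (j.predAbove i)))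
    f

end Module.Basis

theorem stmt15 (k : Type*) [Field k] [CharZero k] (V : Type*) [AddCommGroup V] [Module k V]
    (S : Type*) (b : Module.Basis S k V) (n : ℕ)
    (d wn wn1 : TensorAlgebra k V →ₗ[k] TensorAlgebra k V)
    (hd : ∀ (m : ℕ) (f : Fin m → S),
      d ((List.ofFn fun i => TensorAlgebra.ι k (b (f i))).prod) =
        ∑ j : Fin m, ((-1 : k) ^ (j : ℕ)) •
          (List.ofFn fun i : Fin (m + 1) =>
            TensorAlgebra.ι k (b (f (j.predAbove i)))).prod)
    (hwn : ∀ v : Fin (n + 1) → V,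
      wn ((List.ofFn fun i => TensorAlgebra.ι k (v i)).prod) = glnbF k V v)
    (hwn1 : ∀ v : Fin (n + 1 + 1) → V,
      wn1 ((List.ofFn fun i => TensorAlgebra.ι k (v i)).prod) = glnbF k V v) :
    ∃ g : TensorAlgebra k V →ₗ[k] TensorAlgebra k V,
      ∀ x ∈ (LinearMap.range (TensorAlgebra.ι k (M := V)) ^ (n + 1) :
          Submodule k (TensorAlgebra k V)),
        wn1 (g x) = d (wn x) := by
  let _ : Invertible (2 : k) := invertibleOfNonzero two_ne_zero
  let δ : V →ₗ[k] TensorAlgebra k V := b.constr k fun s => ι k (b s) * ι k (b s)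
  have hδ (s : S) : δ (b s) = ι k (b s) * ι k (b s) := b.constr_basis k _ s
  have hd_eq : d = oddDerivation δ := b.tensorAlgebra_ext_tprod fun m f => by
    rw [oddDerivation_tprod δ _ fun i => hδ (f i)]
    exact hd m f
  refine ⟨b.doublingMap, ?_⟩
  rw [← b.span_tprod]
  refine LinearMap.eqOn_span (f := wn1 ∘ₗ b.doublingMap) (g := d ∘ₗ wn) ?_
  rintro _ ⟨f, rfl⟩
  calc wn1 (b.doublingMap (tprod k V (n + 1) fun i => b (f i)))
      = ∑ j : Fin (n + 1), doublingCoeff k j • glnbF k V fun i => b (f (j.predAbove i)) := by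
        simp only [b.doublingMap_tprod, map_sum, map_smul]
        exact Finset.sum_congr rfl fun j _ => congrArg _ (hwn1 _)
    _ = oddDerivation δ (glnbF k V fun i => b (f i)) :=
        (oddDerivation_glnbF δ _ fun i => hδ (f i)).symm
    _ = d (wn (tprod k V (n + 1) fun i => b (f i))) := by
        rw [hd_eq, TensorAlgebra.tprod_apply, hwn]
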